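/- arXiv:2601.13483 — 2 statements merged into one kernel-verified Lean document; each statement's English description precedes it below -/
import Mathlib

section
/- The set of join-irreducible elements of the lattice 𝓛 is exactly P_𝓛 = { a_{i,j} : i ∈ [n], j ∈ [u_i+1, v_i] }. -/
/-!
Call coordinate `i ∈ [n]` of `x ∈ 𝓛` removable if `u_i < x_i` and (for `i > 1`) `x_{i-1} + 1 < x_i`,
i.e. if `x_i` can be lowered by one without leaving `𝓛`. The elements covered by `x` are exactly
these lowerings: if `y ⋖ x` and `i` is the first coordinate where `y` and `x` differ, then `i` is
removable and `y` lies below the lowering at `i`. Hence `x` is join-irreducible iff it has exactly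
one removable coordinate `i`. Since `u` is strictly increasing, no removable coordinate before `i`
forces `x_t = u_t` for `t < i`, and none after `i` forces `x_t = max (x_i + t - i) u_t` for `t > i`,
i.e. `x = a_{i, x_i}`; conversely `i` is the only removable coordinate of `a_{i,j}`.
-/

namespace LadderPaper

/-- The tuple `a_{i,j}`: entry `t` is `u t` for `t < i` and `max (j + (t - i)) (u t)` for
`t ≥ i` (indices `t ∈ [1,n]`; entries outside `[1,n]` are set to `0`). -/
def atuple (u : ℕ → ℤ) (n i : ℕ) (j : ℤ) : ℕ → ℤ := fun t =>
  if 1 ≤ t ∧ t ≤ n then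
    (if t < i then u t else max (j + ((t : ℤ) - (i : ℤ))) (u t))
  else 0

/-- The tuple `b_{i,j}`: like `a_{i,j}` but with `i`-th entry `j - 1`. -/
def btuple (u : ℕ → ℤ) (n i : ℕ) (j : ℤ) : ℕ → ℤ := fun t =>
  if 1 ≤ t ∧ t ≤ n then
    (if t < i then u t
     else if t = i then j - 1
     else max (j + ((t : ℤ) - (i : ℤ))) (u t))
  else 0

/-- The tuple `(u_1, …, u_n)`. -/
def utuple (u : ℕ → ℤ) (n : ℕ) : ℕ → ℤ := fun t =>
  if 1 ≤ t ∧ t ≤ n then u t else 0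

/-- The lattice `𝓛` of tuples `c` with `u t ≤ c t ≤ v t` for `t ∈ [1,n]`, strictly
increasing entries, and (normalization) `c t = 0` outside `[1,n]`.  It carries the
componentwise (induced product) order. -/
def ladderL (n : ℕ) (u v : ℕ → ℤ) : Set (ℕ → ℤ) :=
  {c | (∀ t, 1 ≤ t → t ≤ n → u t ≤ c t ∧ c t ≤ v t) ∧
       (∀ t, 1 ≤ t → t + 1 ≤ n → c t < c (t + 1)) ∧
       (∀ t, t = 0 ∨ n < t → c t = 0)}

/-- The set `P_𝓛 = { a_{i,j} : i ∈ [n], j ∈ [u_i + 1, v_i] }`. -/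
def PL (n : ℕ) (u v : ℕ → ℤ) : Set (ℕ → ℤ) :=
  {x | ∃ i : ℕ, ∃ j : ℤ, 1 ≤ i ∧ i ≤ n ∧ u i + 1 ≤ j ∧ j ≤ v i ∧ x = atuple u n i j}

/-- The product poset `𝓛 × [r]`. -/
def ladderLr (n : ℕ) (u v : ℕ → ℤ) (r : ℤ) : Set ((ℕ → ℤ) × ℤ) :=
  {p | p.1 ∈ ladderL n u v ∧ 1 ≤ p.2 ∧ p.2 ≤ r}

/-- The set `P_{𝓛×[r]} = { (a_{i,j}, 1) } ∪ { ((u_1,…,u_n), k) : k ∈ [2,r] }`. -/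
def PLr (n : ℕ) (u v : ℕ → ℤ) (r : ℤ) : Set ((ℕ → ℤ) × ℤ) :=
  {p | (p.1 ∈ PL n u v ∧ p.2 = 1) ∨ (p.1 = utuple u n ∧ 2 ≤ p.2 ∧ p.2 ≤ r)}

/-- `ε_i > 1`, with the convention `ε_n > 1` (i.e. `i = n` or `u_{i+1} - u_i > 1`). -/
def epsGt1 (u : ℕ → ℤ) (n i : ℕ) : Prop := i = n ∨ 1 < u (i + 1) - u i

/-- `θ_{i-1} > 1`, with the convention `θ_0 > 1` (i.e. `i = 1` or `v_i - v_{i-1} > 1`). -/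
def thetaGt1 (v : ℕ → ℤ) (i : ℕ) : Prop := i = 1 ∨ 1 < v i - v (i - 1)

/-- Membership in `C = { i ∈ [n-1] : v_i < u_{i+1} } ∪ { n }`. -/
def inC (n : ℕ) (u v : ℕ → ℤ) (i : ℕ) : Prop :=
  (1 ≤ i ∧ i + 1 ≤ n ∧ v i < u (i + 1)) ∨ i = n

/-- The set `C = { i ∈ [n-1] : v_i < u_{i+1} } ∪ { n }`. -/
def Cset (n : ℕ) (u v : ℕ → ℤ) : Set ℕ :=
  {i | 1 ≤ i ∧ i + 1 ≤ n ∧ v i < u (i + 1)} ∪ {n}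

/-- `[p,q]` is one of the blocks `[p_s, q_s]` determined by `C`: `q ∈ C`,
no element of `C` lies in `[p, q-1]`, and either `p = 1` or `p - 1 ∈ C`. -/
def IsBlock (n : ℕ) (u v : ℕ → ℤ) (p q : ℕ) : Prop :=
  1 ≤ p ∧ p ≤ q ∧ q ≤ n ∧ inC n u v q ∧
    (∀ j, p ≤ j → j < q → ¬ inC n u v j) ∧ (p = 1 ∨ inC n u v (p - 1))

/-- `i0 = min { i ∈ [p,q] : ε_i > 1 }` (with the convention `ε_n > 1`). -/
def IsBlockMin (n : ℕ) (u : ℕ → ℤ) (p q i0 : ℕ) : Prop :=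
  p ≤ i0 ∧ i0 ≤ q ∧ epsGt1 u n i0 ∧ ∀ j, p ≤ j → j < i0 → ¬ epsGt1 u n j

/-- The comparability graph of a poset: two distinct elements are adjacent
iff they are comparable. -/
def compGraph (α : Type*) [Preorder α] : SimpleGraph α where
  Adj x y := x ≠ y ∧ (x ≤ y ∨ y ≤ x)
  symm := ⟨fun x y h => ⟨Ne.symm h.1, Or.symm h.2⟩⟩
  loopless := ⟨fun x h => h.1 rfl⟩

/-- A poset is pure if all of its maximal chains have the same cardinality
(equivalently, the same length). -/
def IsPure (α : Type*) [Preorder α] : Prop :=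
  ∀ A B : Set α, IsMaxChain (· ≤ ·) A → IsMaxChain (· ≤ ·) B → A.ncard = B.ncard

open Function

section Removable

variable {n : ℕ} {u v : ℕ → ℤ} {x : ℕ → ℤ} {i : ℕ}

def Removable (n : ℕ) (u x : ℕ → ℤ) (i : ℕ) : Prop :=
  1 ≤ i ∧ i ≤ n ∧ u i < x i ∧ (1 < i → x (i - 1) + 1 < x i)

theorem update_sub_one_mem_ladderL (hx : x ∈ ladderL n u v) (hi : Removable n u x i) :
    update x i (x i - 1) ∈ ladderL n u v := by
  obtain ⟨hbd, hinc, hout⟩ := hx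
  obtain ⟨hi1, hin, hui, hprev⟩ := hi
  refine ⟨fun t ht1 htn => ?_, fun t ht1 htn => ?_, fun t ht => ?_⟩
  · have := hbd t ht1 htn
    rcases eq_or_ne t i with rfl | hti
    · simp only [update_self]; omega
    · simpa only [update_of_ne hti] using this
  · have := hinc t ht1 htn
    rcases eq_or_ne t i with rfl | hti
    · simp only [update_self, update_of_ne (by omega : t + 1 ≠ t)]; omega
    rcases eq_or_ne (t + 1) i with rfl | hti'
    · have := hprev (by omega)
      simp only [update_self, update_of_ne hti, Nat.add_sub_cancel] at this ⊢
      omega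
    · simpa only [update_of_ne hti, update_of_ne hti'] using this
  · rw [update_of_ne (by omega)]; exact hout t ht

theorem update_sub_one_injective {i j : ℕ} (h : update x i (x i - 1) = update x j (x j - 1)) :
    i = j := by
  by_contra hij
  have := congrFun h i
  simp only [update_self, update_of_ne hij] at this
  omega

theorem update_sub_one_covBy (x : ℕ → ℤ) (i : ℕ) : update x i (x i - 1) ⋖ x :=
  Pi.covBy_iff_exists_left_eq.2 ⟨i, _, Order.sub_one_covBy _, rfl⟩

theorem removable_of_lt_of_eq_below {y : ℕ → ℤ} (hx : x ∈ ladderL n u v)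
    (hy : y ∈ ladderL n u v) (hi : y i < x i) (hbelow : ∀ t < i, y t = x t) :
    Removable n u x i := by
  obtain ⟨hbd, hinc, hout⟩ := hy
  have hi1 : 1 ≤ i := by
    by_contra h
    rw [show i = 0 by omega, hout 0 (.inl rfl), hx.2.2 0 (.inl rfl)] at hi
    exact hi.false
  have hin : i ≤ n := by
    by_contra h
    rw [hout i (.inr (by omega)), hx.2.2 i (.inr (by omega))] at hi
    exact hi.false
  refine ⟨hi1, hin, (hbd i hi1 hin).1.trans_lt hi, fun hi' => ?_⟩
  have := hinc (i - 1) (by omega) (by omega)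
  rw [Nat.sub_add_cancel hi1, hbelow (i - 1) (by omega)] at this
  omega

theorem covBy_iff_exists_removable {x y : ladderL n u v} :
    y ⋖ x ↔ ∃ i, Removable n u x.1 i ∧ y.1 = update x.1 i (x.1 i - 1) := by
  constructor
  · intro hyx
    have hle : y.1 ≤ x.1 := hyx.le
    have hne : ∃ i, y.1 i ≠ x.1 i := by
      by_contra! h
      exact hyx.ne (Subtype.ext (funext h))
    classical
    obtain ⟨i, hlt, hbelow⟩ : ∃ i, y.1 i < x.1 i ∧ ∀ t < i, y.1 t = x.1 t :=
      ⟨_, (hle _).lt_of_ne (Nat.find_spec hne), fun t ht => not_not.1 (Nat.find_min hne ht)⟩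
    have hrem : Removable n u x.1 i := removable_of_lt_of_eq_below x.2 y.2 hlt hbelow
    refine ⟨i, hrem, ?_⟩
    let z : ladderL n u v := ⟨_, update_sub_one_mem_ladderL x.2 hrem⟩
    have hyz : y ≤ z := fun t => by
      rcases eq_or_ne t i with rfl | hti
      · simp only [z, update_self]; omega
      · simp only [z, update_of_ne hti]; exact hle t
    have hzx : z < x := update_sub_one_covBy x.1 i |>.lt
    exact congrArg Subtype.val (hyz.eq_of_not_lt fun h => hyx.2 h hzx)
  · rintro ⟨i, hi, hy⟩
    refine CovBy.of_image (OrderEmbedding.subtype _) ?_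
    simpa only [OrderEmbedding.subtype_apply, hy] using update_sub_one_covBy x.1 i

theorem existsUnique_covBy_iff_existsUnique_removable {x : ladderL n u v} :
    (∃! y, y ⋖ x) ↔ ∃! i, Removable n u x.1 i := by
  simp only [covBy_iff_exists_removable]
  constructor
  · rintro ⟨y, ⟨i, hi, hy⟩, huniq⟩
    refine ⟨i, hi, fun j hj => update_sub_one_injective (x := x.1) ?_⟩
    rw [← hy]
    exact congrArg Subtype.val (huniq ⟨_, update_sub_one_mem_ladderL x.2 hj⟩ ⟨j, hj, rfl⟩)
  · rintro ⟨i, hi, huniq⟩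
    refine ⟨⟨_, update_sub_one_mem_ladderL x.2 hi⟩, ⟨i, hi, rfl⟩, ?_⟩
    rintro y ⟨j, hj, hy⟩
    exact Subtype.ext (hy.trans (by rw [huniq j hj]))

theorem atuple_of_lt {j : ℤ} {t : ℕ} (ht1 : 1 ≤ t) (hti : t < i) (hin : i ≤ n) :
    atuple u n i j t = u t := by
  simp [atuple, ht1, hti, show t ≤ n by omega]

theorem atuple_of_le {j : ℤ} {t : ℕ} (hit : i ≤ t) (htn : t ≤ n) (hi1 : 1 ≤ i) :
    atuple u n i j t = max (j + (t - i)) (u t) := by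
  simp [atuple, htn, show 1 ≤ t by omega, show ¬ t < i by omega]

variable (humono : ∀ i, 1 ≤ i → i + 1 ≤ n → u i < u (i + 1))
include humono

theorem removable_atuple_iff {j : ℤ} {t : ℕ} (hi1 : 1 ≤ i) (hin : i ≤ n) (hj : u i < j) :
    Removable n u (atuple u n i j) t ↔ t = i := by
  constructor
  · rintro ⟨ht1, htn, hut, hprev⟩
    by_contra hti
    rcases lt_or_gt_of_ne hti with hti | hti
    · rw [atuple_of_lt ht1 hti hin] at hut
      exact hut.false
    · have hprev := hprev (by omega)
      rw [atuple_of_le hti.le htn hi1] at hut hprev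
      rw [atuple_of_le (by omega) (by omega) hi1, Nat.cast_sub (by omega)] at hprev
      push_cast at hprev
      have := le_max_left (j + (t - 1 - i)) (u (t - 1))
      rcases max_cases (j + (t - i)) (u t) with ⟨h, -⟩ | ⟨h, -⟩ <;> rw [h] at hut hprev <;> omega
  · rintro rfl
    have hti : atuple u n t j t = j := by
      rw [atuple_of_le le_rfl hin hi1, sub_self, add_zero, max_eq_left hj.le]
    refine ⟨hi1, hin, by rwa [hti], fun ht => ?_⟩
    have := humono (t - 1) (by omega) (by omega)
    rw [Nat.sub_add_cancel hi1] at this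
    rw [hti, atuple_of_lt (by omega) (by omega) hin]
    omega

theorem eq_u_of_forall_not_removable_lt (hx : x ∈ ladderL n u v)
    (h : ∀ t < i, ¬ Removable n u x t) : ∀ t, 1 ≤ t → t < i → t ≤ n → x t = u t := by
  intro t
  induction t with
  | zero => omega
  | succ t ih =>
    intro _ hti htn
    by_contra hne
    have hlt := ((hx.1 (t + 1) (by omega) htn).1).lt_of_ne (Ne.symm hne)
    refine h (t + 1) hti ⟨by omega, htn, hlt, fun ht => ?_⟩
    have := humono t (by omega) htn
    rw [Nat.add_sub_cancel, ih (by omega) (by omega) (by omega)]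
    omega

theorem eq_max_of_forall_not_removable_gt (hx : x ∈ ladderL n u v) (hi1 : 1 ≤ i)
    (h : ∀ t, i < t → ¬ Removable n u x t) :
    ∀ t, i ≤ t → t ≤ n → x t = max (x i + (t - i)) (u t) := by
  intro t hit
  induction t, hit using Nat.le_induction with
  | base => intro hin; simpa using (hx.1 i hi1 hin).1
  | succ t hit ih =>
    intro htn
    have hinc := hx.2.1 t (by omega) htn
    have hu := (hx.1 (t + 1) (by omega) htn).1
    have hmono := humono t (by omega) htn
    have hnot : ¬ (u (t + 1) < x (t + 1) ∧ x t + 1 < x (t + 1)) := fun ⟨h1, h2⟩ =>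
      h (t + 1) (by omega) ⟨by omega, htn, h1, fun _ => by simpa using h2⟩
    rw [ih (by omega)] at hinc hnot
    push_cast
    rcases max_cases (x i + (t - i)) (u t) with ⟨h, -⟩ | ⟨h, -⟩ <;>
      rw [h] at hinc hnot <;> omega

theorem mem_PL_of_existsUnique_removable (hx : x ∈ ladderL n u v)
    (h : ∃! i, Removable n u x i) : x ∈ PL n u v := by
  obtain ⟨i, hi, huniq⟩ := h
  have hnot (t : ℕ) (hti : t ≠ i) : ¬ Removable n u x t := fun ht => hti (huniq t ht)
  have hlow := eq_u_of_forall_not_removable_lt humono hx fun t ht => hnot t ht.ne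
  have hhigh := eq_max_of_forall_not_removable_gt humono hx hi.1 fun t ht => hnot t ht.ne'
  refine ⟨i, x i, hi.1, hi.2.1, by linarith [hi.2.2.1], (hx.1 i hi.1 hi.2.1).2, funext fun t => ?_⟩
  by_cases ht : 1 ≤ t ∧ t ≤ n
  · rcases lt_or_ge t i with hti | hti
    · rw [hlow t ht.1 hti ht.2, atuple_of_lt ht.1 hti hi.2.1]
    · rw [hhigh t hti ht.2, atuple_of_le hti ht.2 hi.1]
  · rw [hx.2.2 t (by omega)]
    simp [atuple, ht]

theorem existsUnique_removable_of_mem_PL (h : x ∈ PL n u v) : ∃! i, Removable n u x i := by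
  obtain ⟨i, j, hi1, hin, hj, -, rfl⟩ := h
  have hiff := fun t => removable_atuple_iff (j := j) (t := t) humono hi1 hin (by omega)
  exact ⟨i, (hiff i).2 rfl, fun t => (hiff t).1⟩

end Removable

theorem stmt3_general
    (n : ℕ) (u v : ℕ → ℤ)
    (humono : ∀ i, 1 ≤ i → i + 1 ≤ n → u i < u (i + 1)) :
    ∀ x : ↥(ladderL n u v),
      (∃! y : ↥(ladderL n u v), y ⋖ x) ↔ (x : ℕ → ℤ) ∈ PL n u v := by
  intro x
  rw [existsUnique_covBy_iff_existsUnique_removable]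
  exact ⟨mem_PL_of_existsUnique_removable humono x.2, existsUnique_removable_of_mem_PL humono⟩

theorem stmt3
    (n m : ℕ) (u v : ℕ → ℤ)
    (hn : 1 ≤ n) (hnm : n < m)
    (hu1 : u 1 = 1)
    (humono : ∀ i, 1 ≤ i → i + 1 ≤ n → u i < u (i + 1))
    (hum : u n < (m : ℤ))
    (hv1 : 1 < v 1)
    (hvmono : ∀ i, 1 ≤ i → i + 1 ≤ n → v i < v (i + 1))
    (hvn : v n = (m : ℤ))
    (huv : ∀ i, 1 ≤ i → i ≤ n → u i < v i)
    (hstep : ∀ i, 1 ≤ i → i + 1 ≤ n → u (i + 1) ≤ v i + 1) :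
    ∀ x : ↥(ladderL n u v),
      (∃! y : ↥(ladderL n u v), y ⋖ x) ↔ (x : ℕ → ℤ) ∈ PL n u v :=
  stmt3_general n u v humono

end LadderPaper
end

section
/- Let a_{k,l}, a_{i,j} ∈ P_𝓛 with a_{k,l} < a_{i,j}. Then every saturated chain in the subposet P_𝓛 whose least element is a_{k,l} and whose greatest element is a_{i,j} has length 2(k − i) + (j − l). -/
namespace LadderPaper

/-! Reading off `a_{i,j}` at index `i` gives `j`, so `a_{i,j}` determines `(i, j)`, and the order
on `P_𝓛` becomes `a_{k,l} ≤ a_{i,j} ↔ i ≤ k ∧ l - k ≤ j - i`. Hence `a_{i,j} ↦ j - 2i` is a grading: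
the only covers are `a_{k,l} ⋖ a_{k,l+1}` and `a_{k,l} ⋖ a_{k-1,l-1}`, since otherwise `a_{k,l+1}`
resp. `a_{k-1,l-1}` lies strictly in between. A saturated chain therefore climbs the grading one
step at a time. -/

theorem rank_last_eq_add_of_succ_eq {α : Type*} (r : α → ℤ) :
    ∀ {N : ℕ} (f : Fin (N + 1) → α), (∀ s : Fin N, r (f s.succ) = r (f s.castSucc) + 1) →
      r (f (Fin.last N)) = r (f 0) + N
  | 0, _, _ => by simp
  | N + 1, f, h => by
    have ih := rank_last_eq_add_of_succ_eq r (Fin.init f) fun s => h s.castSucc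
    simp only [Fin.init, Fin.castSucc_zero] at ih
    rw [← Fin.succ_last, h (Fin.last N), ih]
    push_cast
    ring

theorem add_sub_le_of_lt_succ {n : ℕ} {w : ℕ → ℤ}
    (hw : ∀ t, 1 ≤ t → t + 1 ≤ n → w t < w (t + 1)) {a b : ℕ} (ha : 1 ≤ a) (hab : a ≤ b)
    (hbn : b ≤ n) : w a + ((b : ℤ) - a) ≤ w b := by
  induction b, hab using Nat.le_induction with
  | base => simp
  | succ b hab ih =>
    have := hw b (by omega) hbn
    push_cast
    linarith [ih (by omega)]

section atuple

variable {n : ℕ} {u : ℕ → ℤ}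

theorem atuple_self {i : ℕ} {j : ℤ} (hi1 : 1 ≤ i) (hin : i ≤ n) (hj1 : u i + 1 ≤ j) :
    atuple u n i j i = j := by
  simp only [atuple, if_pos (And.intro hi1 hin), lt_irrefl, if_false]
  omega

theorem atuple_le_atuple {i k : ℕ} {j l : ℤ} (hik : i ≤ k) (hjl : l + i ≤ j + k) :
    atuple u n k l ≤ atuple u n i j := by
  intro t
  simp only [atuple]
  split_ifs <;> omega

theorem atuple_le_atuple_iff {i k : ℕ} {j l : ℤ}
    (hk1 : 1 ≤ k) (hkn : k ≤ n) (hl1 : u k + 1 ≤ l) :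
    atuple u n k l ≤ atuple u n i j ↔ i ≤ k ∧ l + i ≤ j + k := by
  refine ⟨fun h => ?_, fun h => atuple_le_atuple h.1 h.2⟩
  have hk := h k
  rw [atuple_self hk1 hkn hl1] at hk
  simp only [atuple, if_pos (And.intro hk1 hkn)] at hk
  split_ifs at hk <;> omega

theorem atuple_lt_atuple_iff {i k : ℕ} {j l : ℤ}
    (hi1 : 1 ≤ i) (hin : i ≤ n) (hj1 : u i + 1 ≤ j)
    (hk1 : 1 ≤ k) (hkn : k ≤ n) (hl1 : u k + 1 ≤ l) :
    atuple u n k l < atuple u n i j ↔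
      i ≤ k ∧ l + i ≤ j + k ∧ ¬(k ≤ i ∧ j + k ≤ l + i) := by
  rw [lt_iff_le_not_ge, atuple_le_atuple_iff hk1 hkn hl1, atuple_le_atuple_iff hi1 hin hj1]
  omega

theorem atuple_inj {i k : ℕ} {j l : ℤ}
    (hi1 : 1 ≤ i) (hin : i ≤ n) (hj1 : u i + 1 ≤ j)
    (hk1 : 1 ≤ k) (hkn : k ≤ n) (hl1 : u k + 1 ≤ l)
    (h : atuple u n k l = atuple u n i j) : k = i ∧ l = j := by
  have h₁ := (atuple_le_atuple_iff hk1 hkn hl1).mp h.le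
  have h₂ := (atuple_le_atuple_iff hi1 hin hj1).mp h.ge
  omega

end atuple

section PL

variable {n : ℕ} {u v : ℕ → ℤ}

theorem atuple_mem_PL {i : ℕ} {j : ℤ} (hi1 : 1 ≤ i) (hin : i ≤ n) (hj1 : u i + 1 ≤ j)
    (hj2 : j ≤ v i) : atuple u n i j ∈ PL n u v :=
  ⟨i, j, hi1, hin, hj1, hj2, rfl⟩

theorem exists_PL_between_of_lt
    (humono : ∀ t, 1 ≤ t → t + 1 ≤ n → u t < u (t + 1))
    (hvmono : ∀ t, 1 ≤ t → t + 1 ≤ n → v t < v (t + 1))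
    {i k : ℕ} {j l : ℤ}
    (hi1 : 1 ≤ i) (hin : i ≤ n) (hj1 : u i + 1 ≤ j) (hj2 : j ≤ v i)
    (hk1 : 1 ≤ k) (hkn : k ≤ n) (hl1 : u k + 1 ≤ l)
    (hlt : atuple u n k l < atuple u n i j) (hrank : j - 2 * i ≠ l - 2 * k + 1) :
    ∃ z ∈ PL n u v, atuple u n k l < z ∧ z < atuple u n i j := by
  obtain ⟨hik, hjl, hne⟩ := (atuple_lt_atuple_iff hi1 hin hj1 hk1 hkn hl1).mp hlt
  rcases hik.eq_or_lt with rfl | hik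
  · have hl1' : u i + 1 ≤ l + 1 := by omega
    refine ⟨atuple u n i (l + 1), atuple_mem_PL hi1 hin hl1' (by omega), ?_, ?_⟩
    · exact (atuple_lt_atuple_iff hi1 hin hl1' hi1 hin hl1).mpr (by omega)
    · exact (atuple_lt_atuple_iff hi1 hin hj1 hi1 hin hl1').mpr (by omega)
  · have hu : u (k - 1) + 1 ≤ l - 1 := by
      have := humono (k - 1) (by omega) (by omega)
      rw [Nat.sub_add_cancel hk1] at this
      omega
    have hv : l - 1 ≤ v (k - 1) := by
      have := add_sub_le_of_lt_succ hvmono hi1 (Nat.le_sub_one_of_lt hik) (by omega)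
      push_cast [Nat.cast_sub hk1] at this
      omega
    refine ⟨atuple u n (k - 1) (l - 1), atuple_mem_PL (by omega) (by omega) hu hv, ?_, ?_⟩
    · refine (atuple_lt_atuple_iff (by omega) (by omega) hu hk1 hkn hl1).mpr ?_
      push_cast [Nat.cast_sub hk1]
      omega
    · refine (atuple_lt_atuple_iff hi1 hin hj1 (by omega) (by omega) hu).mpr ?_
      push_cast [Nat.cast_sub hk1]
      omega

/-- The grading `a_{i,j} ↦ j - 2i` of `P_𝓛`. -/
noncomputable def PL.rank (x : PL n u v) : ℤ :=
  x.2.choose_spec.choose - 2 * x.2.choose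

theorem PL.rank_eq {x : PL n u v} {i : ℕ} {j : ℤ} (hi1 : 1 ≤ i) (hin : i ≤ n)
    (hj1 : u i + 1 ≤ j) (hx : (x : ℕ → ℤ) = atuple u n i j) : PL.rank x = j - 2 * i := by
  obtain ⟨hi1', hin', hj1', -, hx'⟩ := x.2.choose_spec.choose_spec
  obtain ⟨rfl, rfl⟩ := atuple_inj hi1 hin hj1 hi1' hin' hj1' (hx' ▸ hx)
  rfl

theorem PL.rank_covBy
    (humono : ∀ t, 1 ≤ t → t + 1 ≤ n → u t < u (t + 1))
    (hvmono : ∀ t, 1 ≤ t → t + 1 ≤ n → v t < v (t + 1))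
    {x y : PL n u v} (hxy : x ⋖ y) : PL.rank y = PL.rank x + 1 := by
  obtain ⟨k, l, hk1, hkn, hl1, -, hx⟩ := x.2
  obtain ⟨i, j, hi1, hin, hj1, hj2, hy⟩ := y.2
  rw [PL.rank_eq hk1 hkn hl1 hx, PL.rank_eq hi1 hin hj1 hy]
  by_contra hrank
  have hlt : atuple u n k l < atuple u n i j := hx ▸ hy ▸ hxy.lt
  obtain ⟨z, hz, hxz, hzy⟩ :=
    exists_PL_between_of_lt humono hvmono hi1 hin hj1 hj2 hk1 hkn hl1 hlt (by omega)
  exact hxy.2 (c := ⟨z, hz⟩) (show (x : ℕ → ℤ) < z from hx ▸ hxz)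
    (show z < (y : ℕ → ℤ) from hy ▸ hzy)

end PL

theorem stmt9_general
    (n : ℕ) (u v : ℕ → ℤ)
    (humono : ∀ i, 1 ≤ i → i + 1 ≤ n → u i < u (i + 1))
    (hvmono : ∀ i, 1 ≤ i → i + 1 ≤ n → v i < v (i + 1))
    (i k : ℕ) (j l : ℤ)
    (hi1 : 1 ≤ i) (hin : i ≤ n) (hj1 : u i + 1 ≤ j)
    (hk1 : 1 ≤ k) (hkn : k ≤ n) (hl1 : u k + 1 ≤ l) :
    ∀ (N : ℕ) (f : Fin (N + 1) → ↥(PL n u v)),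
      (∀ s : Fin N, f s.castSucc ⋖ f s.succ) →
      ((f 0 : ℕ → ℤ) = atuple u n k l) →
      ((f (Fin.last N) : ℕ → ℤ) = atuple u n i j) →
      (N : ℤ) = 2 * ((k : ℤ) - (i : ℤ)) + (j - l) := by
  intro N f hcov h0 hlast
  have hchain := rank_last_eq_add_of_succ_eq PL.rank f fun s =>
    PL.rank_covBy humono hvmono (hcov s)
  rw [PL.rank_eq hk1 hkn hl1 h0, PL.rank_eq hi1 hin hj1 hlast] at hchain
  linarith

theorem stmt9
    (n m : ℕ) (u v : ℕ → ℤ)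
    (hn : 1 ≤ n) (hnm : n < m)
    (hu1 : u 1 = 1)
    (humono : ∀ i, 1 ≤ i → i + 1 ≤ n → u i < u (i + 1))
    (hum : u n < (m : ℤ))
    (hv1 : 1 < v 1)
    (hvmono : ∀ i, 1 ≤ i → i + 1 ≤ n → v i < v (i + 1))
    (hvn : v n = (m : ℤ))
    (huv : ∀ i, 1 ≤ i → i ≤ n → u i < v i)
    (hstep : ∀ i, 1 ≤ i → i + 1 ≤ n → u (i + 1) ≤ v i + 1)
    (i k : ℕ) (j l : ℤ)
    (hi1 : 1 ≤ i) (hin : i ≤ n) (hj1 : u i + 1 ≤ j) (hj2 : j ≤ v i)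
    (hk1 : 1 ≤ k) (hkn : k ≤ n) (hl1 : u k + 1 ≤ l) (hl2 : l ≤ v k)
    (hlt : atuple u n k l < atuple u n i j) :
    ∀ (N : ℕ) (f : Fin (N + 1) → ↥(PL n u v)),
      (∀ s : Fin N, f s.castSucc ⋖ f s.succ) →
      ((f 0 : ℕ → ℤ) = atuple u n k l) →
      ((f (Fin.last N) : ℕ → ℤ) = atuple u n i j) →
      (N : ℤ) = 2 * ((k : ℤ) - (i : ℤ)) + (j - l) :=
  stmt9_general n u v humono hvmono i k j l hi1 hin hj1 hk1 hkn hl1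

end LadderPaper
end
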